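/- arXiv:2310.08059 — 2 statements merged into one kernel-verified Lean document; each statement's English description precedes it below -/
import Mathlib

section
/- Let k ∈ ℝ with 0 < k < 1, η = 2√2 k K(k)/π and ω = 4(1+k²)K²(k)/π². Then φ(x) = η · sn(2K(k)x/π, k) is a 2π-periodic solution of φ'' + ω φ - φ³ = 0 (i.e., of the equation (-Δ)φ - ωφ + φ³ = 0, the s = 1 case). -/
open Real

-- Unconditional: `deriv` is `0` wherever it is undefined, on both sides alike.
theorem deriv_deriv_const_mul_comp_mul {𝕜 : Type*} [NontriviallyNormedField 𝕜]
    (f : 𝕜 → 𝕜) (a b x : 𝕜) :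
    deriv (deriv fun y => b * f (a * y)) x = b * a ^ 2 * deriv (deriv f) (a * x) := by
  have hfirst : deriv (fun y => b * f (a * y)) = fun y => b * a * deriv f (a * y) := by
    funext y
    rw [deriv_const_mul_field, deriv_comp_mul_left, smul_eq_mul, mul_assoc]
  rw [hfirst, deriv_const_mul_field, deriv_comp_mul_left a (deriv f) x, smul_eq_mul]
  ring

theorem deriv_deriv_const_mul_comp_mul_add_sub_pow_three_eq_zero {𝕜 : Type*}
    [NontriviallyNormedField 𝕜] {f : 𝕜 → 𝕜} {p q : 𝕜}
    (hf : ∀ x, deriv (deriv f) x = -p * f x + q * f x ^ 3) {a b : 𝕜} (hab : q * a ^ 2 = b ^ 2)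
    (x : 𝕜) :
    deriv (deriv fun y => b * f (a * y)) x + p * a ^ 2 * (b * f (a * x))
      - (b * f (a * x)) ^ 3 = 0 := by
  rw [deriv_deriv_const_mul_comp_mul, hf]
  linear_combination b * f (a * x) ^ 3 * hab

theorem stmt6_general (k K : ℝ)
    (sn : ℝ → ℝ)
    (hsn : ∀ x, deriv (deriv sn) x = -(1 + k ^ 2) * sn x + 2 * k ^ 2 * (sn x) ^ 3)
    (hper : ∀ x, sn (x + 4 * K) = sn x) :
    (∀ x, deriv (deriv (fun y => (2 * Real.sqrt 2 * k * K / π) * sn (2 * K * y / π))) x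
        + (4 * (1 + k ^ 2) * K ^ 2 / π ^ 2) *
            ((2 * Real.sqrt 2 * k * K / π) * sn (2 * K * x / π))
        - ((2 * Real.sqrt 2 * k * K / π) * sn (2 * K * x / π)) ^ 3 = 0) ∧
    (∀ x, (2 * Real.sqrt 2 * k * K / π) * sn (2 * K * (x + 2 * π) / π)
        = (2 * Real.sqrt 2 * k * K / π) * sn (2 * K * x / π)) := by
  have hlin (y : ℝ) : 2 * K * y / π = 2 * K / π * y := mul_div_right_comm _ _ _
  constructor
  · have hω : 4 * (1 + k ^ 2) * K ^ 2 / π ^ 2 = (1 + k ^ 2) * (2 * K / π) ^ 2 := by ring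
    have hamp : 2 * k ^ 2 * (2 * K / π) ^ 2 = (2 * Real.sqrt 2 * k * K / π) ^ 2 := by
      linear_combination (-(4 * k ^ 2 * K ^ 2 / π ^ 2)) * sq_sqrt (zero_le_two (α := ℝ))
    simp only [hlin, hω]
    exact deriv_deriv_const_mul_comp_mul_add_sub_pow_three_eq_zero hsn hamp
  · intro x
    have hshift : 2 * K * (x + 2 * π) / π = 2 * K * x / π + 4 * K := by
      field_simp [pi_ne_zero]
      ring
    rw [hshift, hper]

/-- The snoidal profile `φ(x) = η sn(2K(k)x/π, k)` is a `2π`-periodic solution of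
`φ'' + ωφ - φ³ = 0` with `η = 2√2 k K(k)/π` and `ω = 4(1+k²)K(k)²/π²`. -/
theorem stmt6 (k K : ℝ) (hk : 0 < k ∧ k < 1) (hK : 0 < K)
    (sn : ℝ → ℝ) (hsmooth : ContDiff ℝ 2 sn)
    (hsn : ∀ x, deriv (deriv sn) x = -(1 + k ^ 2) * sn x + 2 * k ^ 2 * (sn x) ^ 3)
    (hper : ∀ x, sn (x + 4 * K) = sn x) :
    (∀ x, deriv (deriv (fun y => (2 * Real.sqrt 2 * k * K / π) * sn (2 * K * y / π))) x
        + (4 * (1 + k ^ 2) * K ^ 2 / π ^ 2) *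
            ((2 * Real.sqrt 2 * k * K / π) * sn (2 * K * x / π))
        - ((2 * Real.sqrt 2 * k * K / π) * sn (2 * K * x / π)) ^ 3 = 0) ∧
    (∀ x, (2 * Real.sqrt 2 * k * K / π) * sn (2 * K * (x + 2 * π) / π)
        = (2 * Real.sqrt 2 * k * K / π) * sn (2 * K * x / π)) :=
  stmt6_general k K sn hsn hper
end

section
/- Let L be a self-adjoint operator on L²_per with dense domain H^{2s}_per, let φ ∈ ker(L)^⊥ ∩ range(L), and suppose φ has a strict sign pattern: φ < 0 on (-π,0) and φ > 0 on (0,π). If ȳ ∈ ker(L) is continuous and also satisfies ȳ < 0 on (-π,0) and ȳ > 0 on (0,π), then (φ, ȳ)_{L²} > 0; in particular φ cannot be orthogonal to ȳ, contradicting range(L) ⊆ ker(L)^⊥. Hence no such ȳ exists in ker(L). -/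
open Real MeasureTheory

/-- The sign-pattern contradiction: if `φ` is orthogonal to `ker L` and both `φ`
and a kernel element `ȳ` are negative on `(-π,0)` and positive on `(0,π)`, then
`∫ φ ȳ > 0`, a contradiction; hence no such kernel element exists. -/
theorem stmt14 (L : (ℝ → ℝ) → (ℝ → ℝ)) (φ : ℝ → ℝ)
    (hφc : Continuous φ)
    (hφneg : ∀ x ∈ Set.Ioo (-π) 0, φ x < 0)
    (hφpos : ∀ x ∈ Set.Ioo 0 π, 0 < φ x)
    (hrange : ∀ y : ℝ → ℝ, (L y = 0) → (∫ x in (-π)..π, φ x * y x) = 0) :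
    (∀ y : ℝ → ℝ, Continuous y →
      (∀ x ∈ Set.Ioo (-π) 0, y x < 0) → (∀ x ∈ Set.Ioo 0 π, 0 < y x) →
      0 < ∫ x in (-π)..π, φ x * y x) ∧
    ¬ ∃ y : ℝ → ℝ, Continuous y ∧ L y = 0 ∧
      (∀ x ∈ Set.Ioo (-π) 0, y x < 0) ∧ (∀ x ∈ Set.Ioo 0 π, 0 < y x) := by
  have key : ∀ y : ℝ → ℝ, Continuous y →
      (∀ x ∈ Set.Ioo (-π) 0, y x < 0) → (∀ x ∈ Set.Ioo 0 π, 0 < y x) →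
      0 < ∫ x in (-π)..π, φ x * y x := by
    intro y hyc hyneg hypos
    have hcont : Continuous (fun x => φ x * y x) := hφc.mul hyc
    have hint : ∀ a b : ℝ, IntervalIntegrable (fun x => φ x * y x) volume a b :=
      fun a b => hcont.intervalIntegrable a b
    have h1 : 0 < ∫ x in (-π)..0, φ x * y x := by
      apply intervalIntegral.intervalIntegral_pos_of_pos_on (hint _ _)
      · intro x hx
        exact mul_pos_of_neg_of_neg (hφneg x hx) (hyneg x hx)
      · linarith [pi_pos]
    have h2 : 0 < ∫ x in (0:ℝ)..π, φ x * y x := by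
      apply intervalIntegral.intervalIntegral_pos_of_pos_on (hint _ _)
      · intro x hx
        exact mul_pos (hφpos x hx) (hypos x hx)
      · exact pi_pos
    have := intervalIntegral.integral_add_adjacent_intervals (hint (-π) 0) (hint 0 π)
    rw [← this]
    linarith
  refine ⟨key, ?_⟩
  rintro ⟨y, hyc, hLy, hyneg, hypos⟩
  have := hrange y hLy
  have := key y hyc hyneg hypos
  linarith
end
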